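/- Let φ : [0,∞) → [0,∞) be a homeomorphism with φ(t) ≥ t for all t, and suppose a homeomorphism f : D → D' between proper domains in Banach spaces satisfies, for points x, y ∈ D with k_D(x,y) ≤ t₀ where φ(t₀) ≤ log(3/2): j_{D'}(f(x), f(y)) ≤ φ(j_D(x,y)). Then |f(x) - f(y)| ≤ (1/2)·dist(f(x), ∂D') and consequently k_{D'}(f(x), f(y)) ≤ 2·log(1 + |f(x)-f(y)|/dist(f(x), ∂D')) ≤ 2·φ(k_D(x,y)). -/

import Mathlib

open Metric Set

variable {E : Type*} [NormedAddCommGroup E] [NormedSpace ℝ E]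

/-- The quasihyperbolic length of a curve `γ : [0, L] → D` parametrized by
arc length (1-Lipschitz), in the domain `D`: `∫₀^L dt / dist(γ t, Dᶜ)`. -/
noncomputable def qhLength (D : Set E) (γ : ℝ → E) (L : ℝ) : ℝ :=
  ∫ t in (0:ℝ)..L, 1 / infDist (γ t) Dᶜ

/-- `γ : [0, L] → D` is an admissible (rectifiable, arc-length parametrized)
curve joining `x` to `y` in `D`. -/
def IsQHPath (D : Set E) (x y : E) (γ : ℝ → E) (L : ℝ) : Prop :=
  0 ≤ L ∧ LipschitzOnWith 1 γ (Icc 0 L) ∧ γ 0 = x ∧ γ L = y ∧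
    ∀ t ∈ Icc 0 L, γ t ∈ D

/-- The quasihyperbolic distance in the domain `D`: the infimum of
quasihyperbolic lengths of rectifiable curves joining `x` and `y` in `D`. -/
noncomputable def qhDist (D : Set E) (x y : E) : ℝ :=
  ⨅ p : {p : (ℝ → E) × ℝ // IsQHPath D x y p.1 p.2}, qhLength D p.1.1 p.1.2

/-- The `j`-metric of the domain `D`. -/
noncomputable def jDist (D : Set E) (x y : E) : ℝ :=
  Real.log (1 + ‖x - y‖ / min (infDist x Dᶜ) (infDist y Dᶜ))


/-! The `j`-metric is a lower bound for the quasihyperbolic metric: along an arc-length path of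
length `L ≥ ‖x - y‖` starting at `x` the boundary distance at time `t` is at most `d(x) + t`, so
the quasihyperbolic length is at least `log (1 + L / d(x))`. Hence
`j_{D'}(f x, f y) ≤ φ (j_D(x, y)) ≤ φ (k_D(x, y)) ≤ φ t₀ ≤ log (3 / 2)`, which forces
`r = ‖f x - f y‖ ≤ d / 2` with `d = d(f x)`. Along the segment from `f x` to `f y` the boundary
distance at time `t` is at least `d - t`, so `k_{D'}(f x, f y) ≤ log (d / (d - r))`, and
`r ≤ d / 2` turns this into `2 log (1 + r / d)`. -/

open Real intervalIntegral

theorem LipschitzOnWith.Icc_union_Icc {α : Type*} [PseudoMetricSpace α] {f : ℝ → α}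
    {K : NNReal} {a b c : ℝ} (h₁ : LipschitzOnWith K f (Icc a b))
    (h₂ : LipschitzOnWith K f (Icc b c)) : LipschitzOnWith K f (Icc a c) := by
  have key : ∀ s ∈ Icc a c, ∀ t ∈ Icc a c, s ≤ t → dist (f s) (f t) ≤ K * dist s t := by
    rintro s ⟨has, hsc⟩ t ⟨hat, htc⟩ hst
    rcases le_total t b with htb | hbt
    · exact h₁.dist_le_mul s ⟨has, hst.trans htb⟩ t ⟨hat, htb⟩
    rcases le_total b s with hbs | hsb
    · exact h₂.dist_le_mul s ⟨hbs, hsc⟩ t ⟨hbs.trans hst, htc⟩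
    calc dist (f s) (f t) ≤ dist (f s) (f b) + dist (f b) (f t) := dist_triangle _ _ _
      _ ≤ K * dist s b + K * dist b t :=
          add_le_add (h₁.dist_le_mul s ⟨has, hsb⟩ b ⟨has.trans hsb, le_rfl⟩)
            (h₂.dist_le_mul b ⟨le_rfl, hbt.trans htc⟩ t ⟨hbt, htc⟩)
      _ = K * dist s t := by
          rw [Real.dist_eq, Real.dist_eq, Real.dist_eq, abs_of_nonpos (sub_nonpos.2 hsb),
            abs_of_nonpos (sub_nonpos.2 hbt), abs_of_nonpos (sub_nonpos.2 hst)]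
          ring
  refine LipschitzOnWith.of_dist_le_mul fun s hs t ht => ?_
  rcases le_total s t with hst | hts
  · exact key s hs t ht hst
  · rw [dist_comm, dist_comm s]
    exact key t ht s hs hts

theorem infDist_compl_pos {X : Type*} [MetricSpace X] {D : Set X} (hD : IsOpen D)
    (hDc : Dᶜ.Nonempty) {x : X} (hx : x ∈ D) : 0 < infDist x Dᶜ :=
  (hD.isClosed_compl.notMem_iff_infDist_pos hDc).1 (not_not_intro hx)

-- `1 / (1 - s) ≤ (1 + s) ^ 2` for `0 ≤ s ≤ 1 / 2`, with `s = r / d`.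
theorem log_div_sub_le_two_mul_log_one_add_div {r d : ℝ} (hr : 0 ≤ r) (hd : 0 < d)
    (hrd : 2 * r ≤ d) : log (d / (d - r)) ≤ 2 * log (1 + r / d) := by
  rw [← log_rpow (by positivity), rpow_two]
  refine log_le_log (div_pos hd (by linarith)) ?_
  rw [div_le_iff₀ (by linarith), one_add_div hd.ne', div_pow, div_mul_eq_mul_div,
    le_div_iff₀ (by positivity)]
  nlinarith [mul_nonneg (mul_nonneg hr hr) (by linarith : 0 ≤ d - 2 * r),
    mul_nonneg hr (mul_nonneg hd.le (by linarith : 0 ≤ d - 2 * r))]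

section

omit [NormedSpace ℝ E]

namespace IsQHPath

variable {D : Set E} {x y z : E} {γ γ₁ γ₂ : ℝ → E} {L L₁ L₂ : ℝ}

theorem dist_le (h : IsQHPath D x y γ L) {t : ℝ} (ht : t ∈ Icc 0 L) : dist (γ t) x ≤ t := by
  have := h.2.1.dist_le_mul t ht 0 ⟨le_rfl, h.1⟩
  rwa [h.2.2.1, NNReal.coe_one, one_mul, Real.dist_eq, sub_zero, abs_of_nonneg ht.1] at this

theorem norm_sub_le (h : IsQHPath D x y γ L) : ‖x - y‖ ≤ L := by
  simpa [h.2.2.2.1, dist_eq_norm, norm_sub_rev] using h.dist_le ⟨h.1, le_rfl⟩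

theorem symm (h : IsQHPath D x y γ L) : IsQHPath D y x (fun t => γ (L - t)) L := by
  obtain ⟨hL, hlip, h0, hL', hmem⟩ := h
  have hmaps : MapsTo (L - ·) (Icc 0 L) (Icc 0 L) :=
    fun t ht => ⟨by linarith [ht.2], by linarith [ht.1]⟩
  refine ⟨hL, LipschitzOnWith.of_dist_le_mul fun s hs t ht => ?_, by simpa using hL',
    by simpa using h0, fun t ht => hmem _ (hmaps ht)⟩
  simpa only [NNReal.coe_one, one_mul, dist_sub_left, dist_comm s] using
    hlip.dist_le_mul _ (hmaps hs) _ (hmaps ht)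

theorem trans (h₁ : IsQHPath D x y γ₁ L₁) (h₂ : IsQHPath D y z γ₂ L₂) :
    IsQHPath D x z (fun t => if t ≤ L₁ then γ₁ t else γ₂ (t - L₁)) (L₁ + L₂) := by
  obtain ⟨hL₁, hlip₁, h₁0, h₁L, hmem₁⟩ := h₁
  obtain ⟨hL₂, hlip₂, h₂0, h₂L, hmem₂⟩ := h₂
  have hmaps : MapsTo (· - L₁) (Icc L₁ (L₁ + L₂)) (Icc 0 L₂) :=
    fun t ht => ⟨by linarith [ht.1], by linarith [ht.2]⟩
  have hsecond : ∀ t ∈ Icc L₁ (L₁ + L₂),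
      (if t ≤ L₁ then γ₁ t else γ₂ (t - L₁)) = γ₂ (t - L₁) := by
    rintro t ⟨ht, -⟩
    split_ifs with h
    · rw [le_antisymm h ht, h₁L, sub_self, h₂0]
    · rfl
  refine ⟨by linarith, LipschitzOnWith.Icc_union_Icc (b := L₁) ?_ ?_, by simp [hL₁, h₁0], ?_, ?_⟩
  · refine LipschitzOnWith.of_dist_le_mul fun s hs t ht => ?_
    simpa [if_pos hs.2, if_pos ht.2] using hlip₁.dist_le_mul s hs t ht
  · refine LipschitzOnWith.of_dist_le_mul fun s hs t ht => ?_
    simpa [hsecond s hs, hsecond t ht, dist_sub_right] using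
      hlip₂.dist_le_mul _ (hmaps hs) _ (hmaps ht)
  · dsimp only
    rw [hsecond _ ⟨le_add_of_nonneg_right hL₂, le_rfl⟩, add_sub_cancel_left, h₂L]
  · intro t ht
    dsimp only
    by_cases htL : t ≤ L₁
    · rw [if_pos htL]
      exact hmem₁ t ⟨ht.1, htL⟩
    · rw [if_neg htL]
      exact hmem₂ _ (hmaps ⟨(not_le.1 htL).le, ht.2⟩)

end IsQHPath

theorem qhLength_nonneg (D : Set E) (γ : ℝ → E) {L : ℝ} (hL : 0 ≤ L) : 0 ≤ qhLength D γ L :=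
  integral_nonneg hL fun _ _ => div_nonneg zero_le_one infDist_nonneg

theorem qhLength_reverse (D : Set E) (γ : ℝ → E) (L : ℝ) :
    qhLength D (fun t => γ (L - t)) L = qhLength D γ L := by
  simp only [qhLength, integral_comp_sub_left (fun t => 1 / infDist (γ t) Dᶜ) L, sub_self,
    sub_zero]

theorem qhDist_nonneg (D : Set E) (x y : E) : 0 ≤ qhDist D x y :=
  Real.iInf_nonneg fun p => qhLength_nonneg D _ p.2.1

theorem jDist_nonneg (D : Set E) (x y : E) : 0 ≤ jDist D x y :=
  log_nonneg <| le_add_of_nonneg_right <|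
    div_nonneg (norm_nonneg _) (le_min infDist_nonneg infDist_nonneg)

namespace IsQHPath

variable {D : Set E} {x y : E} {γ : ℝ → E} {L : ℝ}

theorem qhDist_le (h : IsQHPath D x y γ L) : qhDist D x y ≤ qhLength D γ L := by
  have hbdd : BddBelow (range fun p : {p : (ℝ → E) × ℝ // IsQHPath D x y p.1 p.2} =>
      qhLength D p.1.1 p.1.2) := ⟨0, by rintro _ ⟨p, rfl⟩; exact qhLength_nonneg D _ p.2.1⟩
  exact ciInf_le hbdd ⟨(γ, L), h⟩

theorem intervalIntegrable (h : IsQHPath D x y γ L)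
    (hpos : ∀ t ∈ Icc 0 L, 0 < infDist (γ t) Dᶜ) :
    IntervalIntegrable (fun t => 1 / infDist (γ t) Dᶜ) MeasureTheory.volume 0 L := by
  rw [← uIcc_of_le h.1] at hpos
  refine intervalIntegrable_one_div (fun t ht => (hpos t ht).ne') ?_
  rw [uIcc_of_le h.1]
  exact (continuous_infDist_pt _).comp_continuousOn h.2.1.continuousOn

theorem log_one_add_div_le_qhLength (hD : IsOpen D) (h : IsQHPath D x y γ L) :
    log (1 + L / infDist x Dᶜ) ≤ qhLength D γ L := by
  rcases Dᶜ.eq_empty_or_nonempty with hDc | hDc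
  · simpa [hDc] using qhLength_nonneg D γ h.1
  have hd : 0 < infDist x Dᶜ := h.2.2.1 ▸ infDist_compl_pos hD hDc (h.2.2.2.2 0 ⟨le_rfl, h.1⟩)
  have hpos t (ht : t ∈ Icc 0 L) := infDist_compl_pos hD hDc (h.2.2.2.2 t ht)
  calc log (1 + L / infDist x Dᶜ) = ∫ t in (0 : ℝ)..L, 1 / (infDist x Dᶜ + t) := by
        rw [integral_comp_add_left (fun t => 1 / t), add_zero,
          integral_one_div_of_pos hd (by linarith [h.1]), add_div, div_self hd.ne']
    _ ≤ qhLength D γ L := by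
        refine integral_mono_on h.1 (intervalIntegrable_one_div (fun t ht => ?_) ?_)
          (h.intervalIntegrable hpos) fun t ht => one_div_le_one_div_of_le (hpos t ht) ?_
        · rw [uIcc_of_le h.1] at ht
          linarith [ht.1]
        · fun_prop
        · linarith [infDist_le_infDist_add_dist (x := γ t) (y := x) (s := Dᶜ), h.dist_le ht]

theorem qhLength_le_log (h : IsQHPath D x y γ L) (hL : L < infDist x Dᶜ) :
    qhLength D γ L ≤ log (infDist x Dᶜ / (infDist x Dᶜ - L)) := by
  have hlow t (ht : t ∈ Icc 0 L) : infDist x Dᶜ - t ≤ infDist (γ t) Dᶜ := by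
    linarith [infDist_le_infDist_add_dist (x := x) (y := γ t) (s := Dᶜ), dist_comm x (γ t),
      h.dist_le ht]
  have hsub t (ht : t ∈ Icc 0 L) : 0 < infDist x Dᶜ - t := by linarith [ht.2]
  calc qhLength D γ L ≤ ∫ t in (0 : ℝ)..L, 1 / (infDist x Dᶜ - t) := by
        refine integral_mono_on h.1
          (h.intervalIntegrable fun t ht => (hsub t ht).trans_le (hlow t ht))
          (intervalIntegrable_one_div (fun t ht => ?_) (by fun_prop))
          fun t ht => one_div_le_one_div_of_le (hsub t ht) (hlow t ht)
        rw [uIcc_of_le h.1] at ht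
        exact (hsub t ht).ne'
    _ = log (infDist x Dᶜ / (infDist x Dᶜ - L)) := by
        rw [integral_comp_sub_left (fun t => 1 / t), sub_zero,
          integral_one_div_of_pos (by linarith) (by linarith [h.1])]

end IsQHPath

theorem log_one_add_div_le_jDist {D : Set E} {x y : E} (hx : 0 < infDist x Dᶜ)
    (hy : 0 < infDist y Dᶜ) : log (1 + ‖x - y‖ / infDist x Dᶜ) ≤ jDist D x y :=
  log_le_log (by positivity) (by gcongr; exact min_le_left _ _)

theorem norm_sub_le_half_infDist_of_jDist_le {D : Set E} {x y : E} (hx : 0 < infDist x Dᶜ)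
    (hy : 0 < infDist y Dᶜ) (h : jDist D x y ≤ log (3 / 2)) :
    ‖x - y‖ ≤ 1 / 2 * infDist x Dᶜ := by
  have hlog := (log_le_log_iff (by positivity) (by norm_num)).1
    ((log_one_add_div_le_jDist hx hy).trans h)
  have hratio : ‖x - y‖ / infDist x Dᶜ ≤ 1 / 2 := by linarith
  rwa [div_le_iff₀ hx] at hratio

end

theorem isQHPath_segment {D : Set E} {x y : E} (h : segment ℝ x y ⊆ D) :
    IsQHPath D x y (fun t => x + (t / ‖y - x‖) • (y - x)) ‖y - x‖ := by
  rcases (norm_nonneg (y - x)).eq_or_lt with hr | hr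
  · obtain rfl : y = x := sub_eq_zero.1 (norm_eq_zero.1 hr.symm)
    refine ⟨norm_nonneg _, LipschitzOnWith.of_dist_le_mul fun s _ t _ => by simp, by simp,
      by simp, fun t _ => by simpa using h (left_mem_segment ℝ y y)⟩
  refine ⟨hr.le, LipschitzOnWith.of_dist_le_mul fun s _ t _ => ?_, by simp, ?_, fun t ht => h ?_⟩
  · rw [dist_add_left, dist_eq_norm, ← sub_smul, norm_smul, ← sub_div, norm_div,
      Real.norm_eq_abs, Real.norm_eq_abs (‖y - x‖), abs_norm, div_mul_cancel₀ _ hr.ne',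
      NNReal.coe_one, one_mul, Real.dist_eq]
  · simp [div_self hr.ne']
  · rw [segment_eq_image']
    exact ⟨t / ‖y - x‖, ⟨div_nonneg ht.1 hr.le, div_le_one_of_le₀ ht.2 hr.le⟩, rfl⟩

theorem exists_isQHPath {D : Set E} (hD : IsOpen D) (hconn : IsPreconnected D) {x y : E}
    (hx : x ∈ D) (hy : y ∈ D) : ∃ γ L, IsQHPath D x y γ L := by
  refine hconn.induction₂ (fun x y => ∃ γ L, IsQHPath D x y γ L) (fun z hz => ?_) ?_ ?_ hx hy
  · obtain ⟨ε, hε, hball⟩ := Metric.isOpen_iff.1 hD z hz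
    filter_upwards [nhdsWithin_le_nhds (ball_mem_nhds z hε)] with w hw
    exact ⟨_, _, isQHPath_segment
      (((convex_ball z ε).segment_subset (mem_ball_self hε) hw).trans hball)⟩
  · rintro _ _ _ - - - ⟨_, _, h₁⟩ ⟨_, _, h₂⟩
    exact ⟨_, _, h₁.trans h₂⟩
  · rintro _ _ - - ⟨_, _, h⟩
    exact ⟨_, _, h.symm⟩

theorem jDist_le_qhDist {D : Set E} (hD : IsOpen D) (hconn : IsPreconnected D) {x y : E}
    (hx : x ∈ D) (hy : y ∈ D) : jDist D x y ≤ qhDist D x y := by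
  obtain ⟨γ₀, L₀, h₀⟩ := exists_isQHPath hD hconn hx hy
  have : Nonempty {p : (ℝ → E) × ℝ // IsQHPath D x y p.1 p.2} := ⟨⟨(γ₀, L₀), h₀⟩⟩
  refine le_ciInf fun ⟨(γ, L), h⟩ => ?_
  have hm : 0 ≤ min (infDist x Dᶜ) (infDist y Dᶜ) := le_min infDist_nonneg infDist_nonneg
  calc jDist D x y ≤ log (1 + L / min (infDist x Dᶜ) (infDist y Dᶜ)) :=
        log_le_log (by positivity) (by gcongr; exact h.norm_sub_le)
    _ ≤ qhLength D γ L := by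
        rcases min_choice (infDist x Dᶜ) (infDist y Dᶜ) with hmin | hmin <;> rw [hmin]
        · exact h.log_one_add_div_le_qhLength hD
        · simpa [qhLength_reverse] using h.symm.log_one_add_div_le_qhLength hD

theorem qhDist_le_two_mul_log {D : Set E} {x y : E} (hd : 0 < infDist x Dᶜ)
    (h : 2 * ‖x - y‖ ≤ infDist x Dᶜ) :
    qhDist D x y ≤ 2 * log (1 + ‖x - y‖ / infDist x Dᶜ) := by
  have hr : ‖y - x‖ < infDist x Dᶜ := by rw [norm_sub_rev]; linarith [norm_nonneg (x - y)]
  have hpath := isQHPath_segment (D := D)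
    (((convex_ball x _).segment_subset (mem_ball_self hd) (mem_ball_iff_norm.2 hr)).trans
      ball_infDist_compl_subset)
  calc qhDist D x y ≤ log (infDist x Dᶜ / (infDist x Dᶜ - ‖y - x‖)) :=
        hpath.qhDist_le.trans (hpath.qhLength_le_log hr)
    _ ≤ 2 * log (1 + ‖x - y‖ / infDist x Dᶜ) := by
        rw [norm_sub_rev]
        exact log_div_sub_le_two_mul_log_one_add_div (norm_nonneg _) hd h

theorem stmt_18_general {E' : Type*} [NormedAddCommGroup E'] [NormedSpace ℝ E']
    (D : Set E) (D' : Set E') (hD : IsOpen D) (hconn : IsConnected D)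
    (hD' : IsOpen D')
    (hne' : D' ≠ univ) (f : E → E') (hmaps : MapsTo f D D')
    (φ : ℝ → ℝ) (hφmono : StrictMonoOn φ (Ici 0))
    (t₀ : ℝ) (ht₀ : 0 ≤ t₀) (hφt₀ : φ t₀ ≤ Real.log (3 / 2))
    (x y : E) (hx : x ∈ D) (hy : y ∈ D) (hk : qhDist D x y ≤ t₀)
    (hj : jDist D' (f x) (f y) ≤ φ (jDist D x y)) :
    ‖f x - f y‖ ≤ (1 / 2) * infDist (f x) D'ᶜ ∧
    qhDist D' (f x) (f y) ≤
      2 * Real.log (1 + ‖f x - f y‖ / infDist (f x) D'ᶜ) ∧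
    2 * Real.log (1 + ‖f x - f y‖ / infDist (f x) D'ᶜ) ≤
      2 * φ (qhDist D x y) := by
  have hfx := infDist_compl_pos hD' (nonempty_compl.2 hne') (hmaps hx)
  have hfy := infDist_compl_pos hD' (nonempty_compl.2 hne') (hmaps hy)
  have hq₀ := qhDist_nonneg D x y
  have hjφ : jDist D' (f x) (f y) ≤ φ (qhDist D x y) :=
    hj.trans (hφmono.monotoneOn (jDist_nonneg D x y) hq₀
      (jDist_le_qhDist hD hconn.isPreconnected hx hy))
  have hnear : ‖f x - f y‖ ≤ 1 / 2 * infDist (f x) D'ᶜ :=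
    norm_sub_le_half_infDist_of_jDist_le hfx hfy
      (hjφ.trans ((hφmono.monotoneOn hq₀ ht₀ hk).trans hφt₀))
  refine ⟨hnear, qhDist_le_two_mul_log hfx (by linarith), ?_⟩
  gcongr
  exact (log_one_add_div_le_jDist hfx hfy).trans hjφ

theorem stmt_18 {E' : Type*} [NormedAddCommGroup E'] [NormedSpace ℝ E']
    [CompleteSpace E] [CompleteSpace E']
    (D : Set E) (D' : Set E') (hD : IsOpen D) (hconn : IsConnected D)
    (hne : D ≠ univ) (hD' : IsOpen D') (hconn' : IsConnected D')
    (hne' : D' ≠ univ) (f : E → E') (hmaps : MapsTo f D D')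
    (φ : ℝ → ℝ) (hφmono : StrictMonoOn φ (Ici 0))
    (hφcont : ContinuousOn φ (Ici 0)) (hφ0 : φ 0 = 0)
    (hφge : ∀ t, 0 ≤ t → t ≤ φ t)
    (t₀ : ℝ) (ht₀ : 0 ≤ t₀) (hφt₀ : φ t₀ ≤ Real.log (3 / 2))
    (x y : E) (hx : x ∈ D) (hy : y ∈ D) (hk : qhDist D x y ≤ t₀)
    (hj : jDist D' (f x) (f y) ≤ φ (jDist D x y)) :
    ‖f x - f y‖ ≤ (1 / 2) * infDist (f x) D'ᶜ ∧
    qhDist D' (f x) (f y) ≤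
      2 * Real.log (1 + ‖f x - f y‖ / infDist (f x) D'ᶜ) ∧
    2 * Real.log (1 + ‖f x - f y‖ / infDist (f x) D'ᶜ) ≤
      2 * φ (qhDist D x y) :=
  stmt_18_general D D' hD hconn hD' hne' f hmaps φ hφmono t₀ ht₀ hφt₀ x y hx hy hk hj
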